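/- arXiv:1901.00764 — 2 statements merged into one kernel-verified Lean document; each statement's English description precedes it below -/
import Mathlib

section
/- Let 0 < b1, b2 < 1, q = b1/b2, and k ≥ 1. Consider the stochastic six vertex occupation process g(t) started from a left-finite configuration g with finitely many particles, and the reversed k-particle location process y(t) started from y_1 > ... > y_k. If all particles of g lie strictly to the left of y_k (i.e., g_i = 0 for i ≥ y_k), then the one-step duality equation E^g[H(g(1), y)] = E^y[H(g, y(1))] holds with both sides computed from the functional H(g,y) = Π_{i=1}^k g_{y_i} q^{-N_{y_i}(g)}, where the left side is nonzero only on the event that the rightmost particle of g(1) lands exactly at y_k... In particular, if g has fewer than k particles, both sides equal 0. -/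
/-!  The stochastic six vertex model as an interacting particle system, in particle
location coordinates.  A configuration is a strictly increasing list of particle
locations in `ℤ` (finitely many particles).  The one-step update acts sequentially
from the left: a (non-displaced) particle stays with probability `b1` and otherwise
jumps right a geometric(`b2`) number of sites truncated by the position of the next
particle; a particle whose site has just been reached by the previous particle is
displaced and forced to jump (case (b) of the update rule). -/

/-- Probability that a particle jumps `n` sites right, given the displaced flag `disp`
and the gap `gap` to its right neighbor (`none` if there is no right neighbor). -/
noncomputable def jumpProb (b1 b2 : ℝ) (disp : Bool) (gap : Option ℤ) (n : ℤ) : ℝ :=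
  if disp then
    match gap with
    | none => if 1 ≤ n then (1 - b2) * b2 ^ (n - 1).toNat else 0
    | some d => if 1 ≤ n ∧ n < d then (1 - b2) * b2 ^ (n - 1).toNat
                else if n = d then b2 ^ (d - 1).toNat else 0
  else
    if n = 0 then b1
    else match gap with
      | none => if 1 ≤ n then (1 - b1) * (1 - b2) * b2 ^ (n - 1).toNat else 0
      | some d => if 1 ≤ n ∧ n < d then (1 - b1) * (1 - b2) * b2 ^ (n - 1).toNat
                  else if n = d then (1 - b1) * b2 ^ (d - 1).toNat else 0

/-- One-step transition probability of the S6V location process from the increasing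
list `x` of particle locations to the increasing list `z`, where `disp` records
whether the leftmost particle of `x` has just been displaced. -/
noncomputable def stepK (b1 b2 : ℝ) : Bool → List ℤ → List ℤ → ℝ
  | _, [], [] => 1
  | disp, a :: rest, z :: zrest =>
      jumpProb b1 b2 disp (rest.head?.map (fun nb => nb - a)) (z - a) *
        stepK b1 b2 (decide (rest.head? = some z)) rest zrest
  | _, _, _ => 0

/-- One-step transition probability of the reversed S6V location process acting on
decreasing lists (particles jump left): the mirror image of `stepK`. -/
noncomputable def revK (b1 b2 : ℝ) (y z : List ℤ) : ℝ :=
  stepK b1 b2 false ((y.map fun a => -a).reverse) ((z.map fun a => -a).reverse)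

/-- Schütz's duality functional in particle-location coordinates:
`H̃(x, y) = Π_i 1_{y_i ∈ x} q^{-#{j : x_j ≤ y_i}}`. -/
noncomputable def Hfun (q : ℝ) (x y : List ℤ) : ℝ :=
  (y.map fun yi =>
    (if yi ∈ x then (1 : ℝ) else 0) *
      q ^ (-(x.countP (fun xj => decide (xj ≤ yi)) : ℤ))).prod

/-! After one step every particle of `x(1)` but the last one still lies weakly left of a
particle of `x` (it cannot overtake its right neighbour's original site), so only the last
particle of `x(1)` can occupy a site of `y`: for `k ≥ 2` the left side vanishes.  Symmetrically
every particle of `y(1)` but one lies weakly right of a particle of `y`, hence off `x`, and the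
right side vanishes as well.

For `k = 1`, `y = [c]`, both sides equal `(1 - b1)(1 - b2) Σ_i q^{-i} b2^{c - x_i - 1}`
(`gapSum`).  On the right this is the single jump `c → x_i`.  On the left, `H(x(1), [c])` is
`q^{-n}` times the indicator that the last particle lands on `c`.  Peeling off the leftmost
particle: it lands on its neighbour's site with probability `moveProb · b2^{gap - 1}`, which
raises the neighbour's chance of moving from `1 - b1` to `1`, and `b1 / q = b2` turns this extra
`b1` into exactly one more geometric factor `b2`. -/

open Finset

lemma sum_Icc_one_geom (b : ℝ) (m : ℤ) :
    ∑ n ∈ Icc 1 m, (1 - b) * b ^ (n - 1).toNat = 1 - b ^ m.toNat := by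
  rw [← geom_sum_mul_neg, sum_mul]
  refine sum_nbij' (fun n => (n - 1).toNat) (fun k => (k : ℤ) + 1) ?_ ?_ ?_ ?_ ?_ <;>
    intros <;> simp_all <;> first | omega | ring

lemma sum_Icc_comp_sub (f : ℤ → ℝ) (a c : ℤ) :
    ∑ z ∈ Icc a c, f (z - a) = ∑ n ∈ Icc 0 (c - a), f n :=
  sum_nbij' (· - a) (· + a) (by intros; simp_all) (by intros; simp_all; omega)
    (by intros; simp) (by intros; simp) (by simp)

noncomputable def moveProb (b1 : ℝ) (disp : Bool) : ℝ := if disp then 1 else 1 - b1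

section JumpProb
variable {b1 b2 : ℝ} {disp : Bool} {d n : ℤ}

lemma nonneg_of_jumpProb_none_ne_zero (h : jumpProb b1 b2 disp none n ≠ 0) : 0 ≤ n := by
  unfold jumpProb at h
  cases disp <;> simp only [Bool.false_eq_true, if_false, if_true] at h <;>
    split_ifs at h <;> first | omega | exact absurd rfl h

lemma eq_zero_or_le_of_jumpProb_some_ne_zero (h : jumpProb b1 b2 disp (some d) n ≠ 0) :
    n = 0 ∨ n ≤ d := by
  unfold jumpProb at h
  cases disp <;> simp only [Bool.false_eq_true, if_false, if_true] at h <;>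
    split_ifs at h <;> first | omega | exact absurd rfl h

lemma mem_Icc_of_jumpProb_some_ne_zero (hd : 0 ≤ d) (h : jumpProb b1 b2 disp (some d) n ≠ 0) :
    n ∈ Icc 0 d := by
  rw [mem_Icc]
  unfold jumpProb at h
  cases disp <;> simp only [Bool.false_eq_true, if_false, if_true] at h <;>
    split_ifs at h <;> first | omega | exact absurd rfl h

lemma jumpProb_some_zero (hd : 1 ≤ d) :
    jumpProb b1 b2 disp (some d) 0 = 1 - moveProb b1 disp := by
  cases disp <;> simp [jumpProb, moveProb, show (0 : ℤ) ≠ d by omega]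

lemma jumpProb_none_of_pos (hn : 1 ≤ n) :
    jumpProb b1 b2 disp none n = moveProb b1 disp * ((1 - b2) * b2 ^ (n - 1).toNat) := by
  cases disp <;> simp [jumpProb, moveProb, hn, show n ≠ 0 by omega]; ring

lemma jumpProb_some_of_pos_of_lt (hn : 1 ≤ n) (hnd : n < d) :
    jumpProb b1 b2 disp (some d) n = moveProb b1 disp * ((1 - b2) * b2 ^ (n - 1).toNat) := by
  cases disp <;> simp [jumpProb, moveProb, hn, hnd, show n ≠ 0 by omega]; ring

lemma jumpProb_some_self (hd : 1 ≤ d) :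
    jumpProb b1 b2 disp (some d) d = moveProb b1 disp * b2 ^ (d - 1).toNat := by
  cases disp <;> simp [jumpProb, moveProb, show d ≠ 0 by omega]

lemma sum_jumpProb_some (hd : 1 ≤ d) : ∑ n ∈ Icc 0 d, jumpProb b1 b2 disp (some d) n = 1 := by
  have hsplit : Icc 0 d = insert 0 (insert d (Icc 1 (d - 1))) := by ext; simp; omega
  rw [hsplit, sum_insert (by simp; omega), sum_insert (by simp),
    sum_congr rfl fun n hn => jumpProb_some_of_pos_of_lt (mem_Icc.1 hn).1 (by simp at hn; omega),
    ← mul_sum, sum_Icc_one_geom, jumpProb_some_zero hd, jumpProb_some_self hd]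
  ring

lemma sum_jumpProb_mul_decide (hd : 1 ≤ d) {m : ℤ} (hdm : d ≤ m) (F : Bool → ℝ) :
    ∑ n ∈ Icc 0 m, jumpProb b1 b2 disp (some d) n * F (decide (n = d)) =
      F false + moveProb b1 disp * b2 ^ (d - 1).toNat * (F true - F false) := by
  have hvanish : ∀ n ∈ Icc 0 m, n ∉ Icc 0 d →
      jumpProb b1 b2 disp (some d) n * F (decide (n = d)) = 0 := fun n _ hn =>
    mul_eq_zero_of_left (by_contra fun h => hn (mem_Icc_of_jumpProb_some_ne_zero (by omega) h)) _
  have hterm : ∀ n, jumpProb b1 b2 disp (some d) n * F (decide (n = d)) =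
      jumpProb b1 b2 disp (some d) n * F false +
        if n = d then jumpProb b1 b2 disp (some d) n * (F true - F false) else 0 := by
    intro n; by_cases h : n = d <;> simp [h]; ring
  rw [← sum_subset (Icc_subset_Icc_right hdm) hvanish]
  simp only [hterm, sum_add_distrib, ← sum_mul, sum_jumpProb_some hd, sum_ite_eq',
    mem_Icc, le_refl, true_and, show 0 ≤ d by omega, if_true, jumpProb_some_self hd]
  ring

end JumpProb

section Support
variable {b1 b2 q : ℝ} {disp : Bool} {x z : List ℤ}

lemma length_eq_of_stepK_ne_zero (h : stepK b1 b2 disp x z ≠ 0) : z.length = x.length := by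
  induction x generalizing disp z with
  | nil => cases z <;> simp_all [stepK]
  | cons a rest ih =>
    cases z with
    | nil => simp [stepK] at h
    | cons z1 zr => simp [ih (mul_ne_zero_iff.1 h).2]

lemma forall₂_le_of_stepK_ne_zero (hx : x.IsChain (· < ·)) (h : stepK b1 b2 disp x z ≠ 0) :
    List.Forall₂ (· ≤ ·) x z := by
  induction x generalizing disp z with
  | nil => cases z <;> simp_all [stepK]
  | cons a rest ih =>
    cases z with
    | nil => simp [stepK] at h
    | cons z1 zr =>
      rw [stepK, mul_ne_zero_iff] at h
      refine .cons ?_ (ih hx.tail h.2)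
      cases rest with
      | nil => have := nonneg_of_jumpProb_none_ne_zero h.1; omega
      | cons r rs =>
        have hr := (List.isChain_cons_cons.1 hx).1
        have := mem_Icc.1 (mem_Icc_of_jumpProb_some_ne_zero (d := r - a) (by omega) h.1)
        omega

lemma exists_ge_of_mem_dropLast_of_stepK_ne_zero (h : stepK b1 b2 disp x z ≠ 0) {b : ℤ}
    (hb : b ∈ z.dropLast) : ∃ a ∈ x, b ≤ a := by
  induction x generalizing disp z with
  | nil => cases z <;> simp_all [stepK]
  | cons a rest ih =>
    cases z with
    | nil => simp at hb
    | cons z1 zr =>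
      rw [stepK, mul_ne_zero_iff] at h
      cases rest with
      | nil => cases zr <;> simp_all [stepK]
      | cons r rs =>
        cases zr with
        | nil => simp [stepK] at h
        | cons z2 zs =>
          rcases List.mem_cons.1 (List.dropLast_cons_cons ▸ hb) with rfl | hb
          · rcases eq_zero_or_le_of_jumpProb_some_ne_zero (d := r - a) h.1 with h0 | h1
            · exact ⟨a, List.mem_cons_self .., by omega⟩
            · exact ⟨r, by simp, by omega⟩
          · obtain ⟨a', ha', hba'⟩ := ih h.2 hb
            exact ⟨a', List.mem_cons_of_mem a ha', hba'⟩

lemma eq_getLast_of_stepK_ne_zero (h : stepK b1 b2 disp x z ≠ 0) {c : ℤ}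
    (hxc : ∀ a ∈ x, a < c) (hc : c ∈ z) : c = z.getLast (List.ne_nil_of_mem hc) := by
  have hz := List.dropLast_append_getLast (List.ne_nil_of_mem hc)
  rw [← hz, List.mem_append, List.mem_singleton] at hc
  rcases hc with hc | hc
  · obtain ⟨a, ha, hca⟩ := exists_ge_of_mem_dropLast_of_stepK_ne_zero h hc
    exact absurd (hxc a ha) (not_lt.2 hca)
  · exact hc

lemma mem_of_Hfun_ne_zero {w : List ℤ} (h : Hfun q x w ≠ 0) {a : ℤ} (ha : a ∈ w) :
    a ∈ x := by
  by_contra hax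
  exact h (List.prod_eq_zero (List.mem_map.2 ⟨a, ha, by simp [hax]⟩))

lemma stepK_mul_Hfun_eq_zero_of_two_le {y : List ℤ} (hy : y.IsChain (· > ·))
    (hy2 : 2 ≤ y.length) (hleft : ∀ a ∈ x, ∀ c ∈ y, a < c) (z : List ℤ) :
    stepK b1 b2 false x z * Hfun q z y = 0 := by
  by_contra h
  obtain ⟨hstep, hH⟩ := mul_ne_zero_iff.1 h
  obtain ⟨c1, c2, ys, rfl⟩ : ∃ c1 c2 ys, y = c1 :: c2 :: ys := by
    match y, hy2 with
    | c1 :: c2 :: ys, _ => exact ⟨c1, c2, ys, rfl⟩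
  have hz : z ≠ [] := List.ne_nil_of_mem (mem_of_Hfun_ne_zero hH (List.mem_cons_self ..))
  have hlast : ∀ c ∈ c1 :: c2 :: ys, c = z.getLast hz := fun c hc =>
    eq_getLast_of_stepK_ne_zero hstep (fun a ha => hleft a ha c hc) (mem_of_Hfun_ne_zero hH hc)
  have := (List.isChain_cons_cons.1 hy).1
  have := (hlast c1 (by simp)).trans (hlast c2 (by simp)).symm
  omega

lemma revK_mul_Hfun_eq_zero_of_two_le {y : List ℤ} (hy2 : 2 ≤ y.length)
    (hleft : ∀ a ∈ x, ∀ c ∈ y, a < c) (w : List ℤ) : revK b1 b2 y w * Hfun q x w = 0 := by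
  by_contra h
  obtain ⟨hrev, hH⟩ := mul_ne_zero_iff.1 h
  have hlen := length_eq_of_stepK_ne_zero hrev
  obtain ⟨w0, b, ws, rfl⟩ : ∃ w0 b ws, w = w0 :: b :: ws := by
    match w, hlen with
    | w0 :: b :: ws, _ => exact ⟨w0, b, ws, rfl⟩
    | [], h | [_], h => simp at h; omega
  obtain ⟨a, ha, hba⟩ := exists_ge_of_mem_dropLast_of_stepK_ne_zero hrev (b := -b) (by simp)
  have := hleft b (mem_of_Hfun_ne_zero hH (by simp)) (-a) (by simpa using ha)
  omega

end Support

section SingleSite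
variable {b1 b2 q : ℝ} {c : ℤ} {disp : Bool} {x z : List ℤ}

lemma Hfun_singleton_singleton (a : ℤ) : Hfun q [a] [c] = if c = a then q⁻¹ else 0 := by
  by_cases h : c = a <;> simp [Hfun, h]

lemma Hfun_cons_singleton_of_lt (hq : q ≠ 0) {a : ℤ} (h : a < c) :
    Hfun q (a :: z) [c] = q⁻¹ * Hfun q z [c] := by
  have hc : c ≠ a := by omega
  simp only [Hfun, List.map_cons, List.map_nil, List.prod_singleton, List.mem_cons, hc,
    false_or, List.countP_cons, decide_eq_true h.le, if_true]
  push_cast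
  rw [neg_add, zpow_add₀ hq, zpow_neg_one]
  ring

lemma Hfun_cons_singleton_self {a : ℤ} (h : ∀ b ∈ x, a < b) :
    Hfun q (a :: x) [a] = q⁻¹ := by
  have hx : x.countP (fun b => decide (b ≤ a)) = 0 :=
    List.countP_eq_zero.2 fun b hb => by simpa using h b hb
  simp [Hfun, List.countP_cons, hx]

noncomputable def boundedTargets (c : ℤ) : List ℤ → Finset (List ℤ)
  | [] => {[]}
  | a :: rest => (Icc a c ×ˢ boundedTargets c rest).image fun p => p.1 :: p.2

lemma mem_boundedTargets :
    z ∈ boundedTargets c x ↔ List.Forall₂ (· ≤ ·) x z ∧ ∀ b ∈ z, b ≤ c := by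
  induction x generalizing z with
  | nil => cases z <;> simp [boundedTargets]
  | cons a rest ih =>
    cases z with
    | nil => simp [boundedTargets]
    | cons z1 zr => simp [boundedTargets, ih]; tauto

lemma sum_boundedTargets_cons (f : List ℤ → ℝ) (a : ℤ) (rest : List ℤ) :
    ∑ z ∈ boundedTargets c (a :: rest), f z =
      ∑ z1 ∈ Icc a c, ∑ zr ∈ boundedTargets c rest, f (z1 :: zr) := by
  rw [boundedTargets, ← sum_product' (f := fun z1 zr => f (z1 :: zr))]
  exact sum_image fun p _ p' _ h => Prod.ext (List.cons.inj h).1 (List.cons.inj h).2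

lemma mem_boundedTargets_of_stepK_mul_Hfun_ne_zero (hx : x.IsChain (· < ·))
    (hxc : ∀ a ∈ x, a < c) (h : stepK b1 b2 disp x z * Hfun q z [c] ≠ 0) :
    z ∈ boundedTargets c x := by
  obtain ⟨hstep, hH⟩ := mul_ne_zero_iff.1 h
  have hcz : c ∈ z := mem_of_Hfun_ne_zero hH (List.mem_singleton_self c)
  refine mem_boundedTargets.2 ⟨forall₂_le_of_stepK_ne_zero hx hstep, fun b hb => ?_⟩
  rw [← List.dropLast_append_getLast (List.ne_nil_of_mem hcz), List.mem_append,
    List.mem_singleton, ← eq_getLast_of_stepK_ne_zero hstep hxc hcz] at hb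
  rcases hb with hb | rfl
  · obtain ⟨a, ha, hba⟩ := exists_ge_of_mem_dropLast_of_stepK_ne_zero hstep hb
    exact hba.trans (hxc a ha).le
  · exact le_rfl

noncomputable def gapSum (q b2 : ℝ) (c : ℤ) : List ℤ → ℝ
  | [] => 0
  | a :: rest => q⁻¹ * (b2 ^ (c - a - 1).toNat + gapSum q b2 c rest)

noncomputable def hitSum (b1 b2 q : ℝ) (c : ℤ) (disp : Bool) : List ℤ → ℝ
  | [] => 0
  | a :: rest =>
      q⁻¹ * (moveProb b1 disp * b2 ^ (c - a - 1).toNat + (1 - b1) * gapSum q b2 c rest)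

lemma hitSum_false (x : List ℤ) : hitSum b1 b2 q c false x = (1 - b1) * gapSum q b2 c x := by
  cases x with
  | nil => simp [hitSum, gapSum]
  | cons a rest => simp only [hitSum, gapSum, moveProb, Bool.false_eq_true, if_false]; ring

lemma sum_stepK_cons_cons_mul_Hfun_singleton (hq : q ≠ 0) {a r : ℤ} {rs : List ℤ}
    (hra : a ≤ r) (hrc : r < c) :
    ∑ z ∈ boundedTargets c (a :: r :: rs), stepK b1 b2 disp (a :: r :: rs) z * Hfun q z [c] =
      q⁻¹ * ∑ n ∈ Icc 0 (c - a), jumpProb b1 b2 disp (some (r - a)) n *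
        ∑ z ∈ boundedTargets c (r :: rs),
          stepK b1 b2 (decide (n = r - a)) (r :: rs) z * Hfun q z [c] := by
  rw [sum_boundedTargets_cons, ← sum_Icc_comp_sub fun n => jumpProb b1 b2 disp (some (r - a)) n *
      ∑ z ∈ boundedTargets c (r :: rs),
        stepK b1 b2 (decide (n = r - a)) (r :: rs) z * Hfun q z [c],
    mul_sum]
  refine sum_congr rfl fun z1 _ => ?_
  by_cases hz1r : z1 ≤ r
  · rw [show decide (z1 - a = r - a) = decide (r = z1) from decide_eq_decide.2 (by omega),
      mul_sum, mul_sum]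
    refine sum_congr rfl fun zr _ => ?_
    simp only [stepK, List.head?_cons, Option.map_some, Option.some.injEq,
      Hfun_cons_singleton_of_lt hq (hz1r.trans_lt hrc)]
    ring
  · have hj : jumpProb b1 b2 disp (some (r - a)) (z1 - a) = 0 := by
      by_contra h
      have := mem_Icc.1 (mem_Icc_of_jumpProb_some_ne_zero (by omega) h)
      omega
    simp [stepK, hj]

lemma sum_stepK_mul_Hfun_singleton (hb1 : b1 ≠ 0) (hb2 : b2 ≠ 0) (hq : q = b1 / b2)
    (hx : x.IsChain (· < ·)) (hxc : ∀ a ∈ x, a < c) (disp : Bool) :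
    ∑ z ∈ boundedTargets c x, stepK b1 b2 disp x z * Hfun q z [c] =
      (1 - b2) * hitSum b1 b2 q c disp x := by
  induction x generalizing disp with
  | nil => simp [boundedTargets, hitSum, Hfun]
  | cons a rest ih =>
    have hac : a < c := hxc a (by simp)
    cases rest with
    | nil =>
      rw [sum_boundedTargets_cons]
      simp only [boundedTargets, sum_singleton, stepK, mul_one, Hfun_singleton_singleton,
        mul_ite, mul_zero, sum_ite_eq, mem_Icc, hac.le, le_rfl, and_self, if_true]
      rw [List.head?_nil, Option.map_none, jumpProb_none_of_pos (by omega)]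
      simp only [hitSum, gapSum]
      ring
    | cons r rs =>
      have hra : a < r := (List.isChain_cons_cons.1 hx).1
      have hrc : r < c := hxc r (by simp)
      rw [sum_stepK_cons_cons_mul_Hfun_singleton (by rw [hq]; exact div_ne_zero hb1 hb2)
        hra.le hrc]
      simp only [ih hx.tail fun b hb => hxc b (List.mem_cons_of_mem a hb)]
      rw [sum_jumpProb_mul_decide (by omega) (by omega)
        (fun dd => (1 - b2) * hitSum b1 b2 q c dd (r :: rs))]
      have hpow : b2 ^ (c - a - 1).toNat =
          b2 ^ (r - a - 1).toNat * b2 ^ (c - r - 1).toNat * b2 := by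
        rw [← pow_add, ← pow_succ]; congr 1; omega
      have hqinv : q⁻¹ = b2 / b1 := by rw [hq, inv_div]
      simp only [hitSum, gapSum, moveProb, if_true, Bool.false_eq_true, if_false, hpow, hqinv]
      field_simp
      ring

lemma tsum_stepK_mul_Hfun_singleton (hb1 : b1 ≠ 0) (hb2 : b2 ≠ 0) (hq : q = b1 / b2)
    (hx : x.IsChain (· < ·)) (hxc : ∀ a ∈ x, a < c) :
    ∑' z, stepK b1 b2 false x z * Hfun q z [c] = (1 - b1) * (1 - b2) * gapSum q b2 c x := by
  rw [tsum_eq_sum fun z hz =>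
      by_contra fun h => hz (mem_boundedTargets_of_stepK_mul_Hfun_ne_zero hx hxc h),
    sum_stepK_mul_Hfun_singleton hb1 hb2 hq hx hxc, hitSum_false]
  ring

lemma revK_singleton_singleton (a : ℤ) :
    revK b1 b2 [c] [a] = jumpProb b1 b2 false none (c - a) := by
  simp [revK, stepK, sub_eq_add_neg, add_comm]

lemma revK_singleton_eq_zero {w : List ℤ} (hw : w.length ≠ 1) : revK b1 b2 [c] w = 0 :=
  by_contra fun h => hw (by simpa using length_eq_of_stepK_ne_zero h)

lemma sum_map_jumpProb_mul_Hfun (hq : q ≠ 0) (hx : x.Pairwise (· < ·))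
    (hxc : ∀ a ∈ x, a < c) :
    (x.map fun a => jumpProb b1 b2 false none (c - a) * Hfun q x [a]).sum =
      (1 - b1) * (1 - b2) * gapSum q b2 c x := by
  induction x with
  | nil => simp [gapSum]
  | cons a rest ih =>
    obtain ⟨hlt, hrest⟩ := List.pairwise_cons.1 hx
    have htail :
        (rest.map fun b => jumpProb b1 b2 false none (c - b) * Hfun q (a :: rest) [b]).sum =
          q⁻¹ * (rest.map fun b => jumpProb b1 b2 false none (c - b) * Hfun q rest [b]).sum := by
      rw [← List.sum_map_mul_left]
      exact congrArg _ (List.map_congr_left fun b hb => by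
        rw [Hfun_cons_singleton_of_lt hq (hlt b hb)]; ring)
    rw [List.map_cons, List.sum_cons, htail, ih hrest fun b hb => hxc b (by simp [hb]),
      Hfun_cons_singleton_self hlt, jumpProb_none_of_pos (by have := hxc a (by simp); omega)]
    simp only [gapSum, moveProb, Bool.false_eq_true, if_false]
    ring

lemma tsum_revK_singleton_mul_Hfun (hq : q ≠ 0) (hx : x.Pairwise (· < ·))
    (hxc : ∀ a ∈ x, a < c) :
    ∑' w, revK b1 b2 [c] w * Hfun q x w = (1 - b1) * (1 - b2) * gapSum q b2 c x := by
  have hsupp : ∀ w ∉ x.toFinset.image ([·]), revK b1 b2 [c] w * Hfun q x w = 0 := by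
    intro w hw
    match w with
    | [a] => simp_all [Hfun]
    | [] | _ :: _ :: _ => rw [revK_singleton_eq_zero (by simp), zero_mul]
  rw [tsum_eq_sum hsupp, sum_image (by simp), List.sum_toFinset _ hx.nodup]
  simp only [revK_singleton_singleton]
  exact sum_map_jumpProb_mul_Hfun hq hx hxc

end SingleSite

theorem s6v_one_step_duality_left_of_yk_general
    (b1 b2 q : ℝ) (hb1 : 0 < b1) (hb2 : 0 < b2)
    (hq : q = b1 / b2) (k : ℕ) (hk : 1 ≤ k)
    (x y : List ℤ) (hx : x.Chain' (· < ·)) (hy : y.Chain' (· > ·))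
    (hylen : y.length = k)
    (hleft : ∀ a ∈ x, ∀ c ∈ y, a < c) :
    (∑' z : List ℤ, stepK b1 b2 false x z * Hfun q z y
        = ∑' w : List ℤ, revK b1 b2 y w * Hfun q x w) ∧
    (x.length < k →
      (∑' z : List ℤ, stepK b1 b2 false x z * Hfun q z y) = 0 ∧
      (∑' w : List ℤ, revK b1 b2 y w * Hfun q x w) = 0) := by
  obtain hk1 | hk2 := hk.eq_or_lt
  · obtain ⟨c, rfl⟩ : ∃ c, y = [c] := List.length_eq_one_iff.1 (hylen.trans hk1.symm)
    have hxc : ∀ a ∈ x, a < c := fun a ha => hleft a ha c (List.mem_singleton_self c)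
    rw [tsum_stepK_mul_Hfun_singleton hb1.ne' hb2.ne' hq hx hxc,
      tsum_revK_singleton_mul_Hfun (by rw [hq]; positivity) (List.isChain_iff_pairwise.1 hx) hxc]
    refine ⟨rfl, fun hlen => ?_⟩
    rw [List.length_eq_zero_iff.1 (show x.length = 0 by omega)]
    simp [gapSum]
  · have hL : ∑' z : List ℤ, stepK b1 b2 false x z * Hfun q z y = 0 := by
      simp only [stepK_mul_Hfun_eq_zero_of_two_le hy (by omega) hleft, tsum_zero]
    have hR : ∑' w : List ℤ, revK b1 b2 y w * Hfun q x w = 0 := by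
      simp only [revK_mul_Hfun_eq_zero_of_two_le (by omega) hleft, tsum_zero]
    exact ⟨hL.trans hR.symm, fun _ => ⟨hL, hR⟩⟩

/-- One-step duality when all particles of the configuration `x` lie strictly to the
left of every `y_i` (in particular to the left of `y_k`): with `q = b1/b2` and the
Schütz functional `H̃`, `E^x[H̃(x(1), y)] = E^y[H̃(x, y(1))]`; moreover, if `x` has
fewer than `k` particles, both sides equal `0`. -/
theorem s6v_one_step_duality_left_of_yk
    (b1 b2 q : ℝ) (hb1 : 0 < b1) (hb1' : b1 < 1) (hb2 : 0 < b2) (hb2' : b2 < 1)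
    (hq : q = b1 / b2) (k : ℕ) (hk : 1 ≤ k)
    (x y : List ℤ) (hx : x.Chain' (· < ·)) (hy : y.Chain' (· > ·))
    (hylen : y.length = k)
    (hleft : ∀ a ∈ x, ∀ c ∈ y, a < c) :
    (∑' z : List ℤ, stepK b1 b2 false x z * Hfun q z y
        = ∑' w : List ℤ, revK b1 b2 y w * Hfun q x w) ∧
    (x.length < k →
      (∑' z : List ℤ, stepK b1 b2 false x z * Hfun q z y) = 0 ∧
      (∑' w : List ℤ, revK b1 b2 y w * Hfun q x w) = 0) :=
  s6v_one_step_duality_left_of_yk_general b1 b2 q hb1 hb2 hq k hk x y hx hy hylen hleft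
end

section
/- Let 0 < b1, b2 < 1 and q = b1/b2, and let x = (x_1 < ... < x_ℓ) be an ℓ-particle location configuration of the stochastic six vertex model and y = (y_1 > ... > y_k) a k-particle configuration with x_1 < y_k. Denote by x'(t) the (ℓ-1)-particle S6V process started from (x_2 < ... < x_ℓ). Then E^x[ H̃(x(1), y) · 1_{x_1(1) = x_1} ] = q^{-k} b1 · E^{x'}[ H̃(x'(1), y) ], where H̃(x, y) = Π_{i=1}^k 1_{y_i ∈ {x_1,...,x_ℓ}} q^{-#{j : x_j ≤ y_i}}. -/
/-! When the leftmost particle stays at `x1` (probability `b1`), the next particle is not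
displaced, so the remaining particles perform one step of the process started from `x'`.
In `H̃`, the extra particle at `x1 < y_k` lies at no `y_i` and raises every count
`#{j : x_j ≤ y_i}` by one, which contributes the factor `q⁻¹` for each of the `k` sites. -/

theorem tsum_ite_head?_eq_some {α M : Type*} [DecidableEq α] [AddCommMonoid M]
    [TopologicalSpace M] (a : α) (f : List α → M) :
    ∑' z : List α, (if z.head? = some a then f z else 0) = ∑' z : List α, f (a :: z) := by
  have hsupp : Function.support (fun z : List α => if z.head? = some a then f z else 0) ⊆
      Set.range (List.cons a) := by
    rintro (_ | ⟨b, z⟩) hz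
    · simp at hz
    · obtain ⟨rfl, -⟩ : b = a ∧ f (b :: z) ≠ 0 := by simpa using hz
      exact ⟨z, rfl⟩
  rw [← List.cons_injective.tsum_eq hsupp]
  simp

theorem jumpProb_false_zero (b1 b2 : ℝ) (gap : Option ℤ) : jumpProb b1 b2 false gap 0 = b1 := by
  cases gap <;> simp [jumpProb]

-- Since the next particle does not sit at `a`, staying put does not displace it.
theorem stepK_false_cons_cons_self (b1 b2 : ℝ) {a : ℤ} {rest : List ℤ}
    (hnext : rest.head? ≠ some a) (z : List ℤ) :
    stepK b1 b2 false (a :: rest) (a :: z) = b1 * stepK b1 b2 false rest z := by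
  simp [stepK, jumpProb_false_zero, hnext]

theorem Hfun_cons_of_forall_lt (q : ℝ) {a : ℤ} (z : List ℤ) {y : List ℤ}
    (hy : ∀ c ∈ y, a < c) : Hfun q (a :: z) y = q ^ (-(y.length : ℤ)) * Hfun q z y := by
  induction y with
  | nil => simp [Hfun]
  | cons c y ih =>
    have hac : a < c := hy c List.mem_cons_self
    have hmem : c ∈ a :: z ↔ c ∈ z := by simp [hac.ne']
    have hcount : (a :: z).countP (fun xj => decide (xj ≤ c)) =
        z.countP (fun xj => decide (xj ≤ c)) + 1 := by
      simp [hac.le]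
    have hpow : ∀ n : ℕ, q ^ (-((n + 1 : ℕ) : ℤ)) = q⁻¹ * q ^ (-(n : ℤ)) := fun n => by
      simp only [zpow_neg, zpow_natCast, pow_succ, mul_inv, mul_comm]
    have ih' := ih fun c' hc' => hy c' (List.mem_cons_of_mem c hc')
    simp only [Hfun, List.map_cons, List.prod_cons] at ih' ⊢
    rw [ih', if_congr hmem rfl rfl, hcount, List.length_cons, hpow, hpow]
    ring

theorem s6v_frozen_leftmost_particle_identity_general
    (b1 b2 q : ℝ) (k : ℕ)
    (x1 : ℤ) (xs y : List ℤ) (hx : (x1 :: xs).Chain' (· < ·))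
    (hylen : y.length = k)
    (hx1 : ∀ c ∈ y, x1 < c) :
    ∑' z : List ℤ,
        stepK b1 b2 false (x1 :: xs) z *
          (if z.head? = some x1 then Hfun q z y else 0)
      = q ^ (-(k : ℤ)) * b1 * ∑' z : List ℤ, stepK b1 b2 false xs z * Hfun q z y := by
  have hnext : xs.head? ≠ some x1 := by
    cases xs with
    | nil => simp
    | cons a t => simpa using (List.isChain_cons_cons.mp hx).1.ne'
  simp only [mul_ite, mul_zero]
  rw [tsum_ite_head?_eq_some, ← tsum_mul_left]
  refine tsum_congr fun z => ?_
  rw [stepK_false_cons_cons_self b1 b2 hnext, Hfun_cons_of_forall_lt q z hx1, hylen]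
  ring

/-- Lemma 2.2, equation (2.4) of the paper: if `x = (x1 < x2 < ... < xl)`,
`y = (y_1 > ... > y_k)` and `x1 < y_k`, then
`E^x[ H̃(x(1), y) 1_{x_1(1) = x_1} ] = q^{-k} b1 E^{x'}[ H̃(x'(1), y) ]`,
where `x' = (x2 < ... < xl)` and `q = b1/b2`. -/
theorem s6v_frozen_leftmost_particle_identity
    (b1 b2 q : ℝ) (hb1 : 0 < b1) (hb1' : b1 < 1) (hb2 : 0 < b2) (hb2' : b2 < 1)
    (hq : q = b1 / b2) (k : ℕ) (hk : 1 ≤ k)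
    (x1 : ℤ) (xs y : List ℤ) (hx : (x1 :: xs).Chain' (· < ·))
    (hy : y.Chain' (· > ·)) (hylen : y.length = k)
    (hx1 : ∀ c ∈ y, x1 < c) :
    ∑' z : List ℤ,
        stepK b1 b2 false (x1 :: xs) z *
          (if z.head? = some x1 then Hfun q z y else 0)
      = q ^ (-(k : ℤ)) * b1 * ∑' z : List ℤ, stepK b1 b2 false xs z * Hfun q z y :=
  s6v_frozen_leftmost_particle_identity_general b1 b2 q k x1 xs y hx hylen hx1
end
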